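/- arXiv:2004.11653 — 3 statements merged into one kernel-verified Lean document; each statement's English description precedes it below -/
import Mathlib

section
/- Let G ∈ 𝔗_a and let P = P_0,…,P_ℓ be a maximal path in G. Then for every 1 ≤ i ≤ ℓ, the two-vertex sequence P_{i-1}, P_i is the only path in G starting in P_{i-1} and ending in P_i. In particular, if G is additionally reflexive, then ι(P_{i-1},P_i)_G = 2 for all 1 ≤ i ≤ ℓ. -/
/-!
Let `a = P_{i-1}` and `b = P_i`. Every interior vertex `z` of a path `Q` from `a` to `b` satisfies
`a ≺ z ≺ b` in the reachability order of `G*`, while every vertex of `P` is `⪯ a` or `⪰ b`;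
as `G*` is acyclic, `z` is not on `P`. Replacing the arc `ab` of `P` by `Q` then gives a path
whose vertex set properly contains that of `P`, so `Q` has no interior vertex. For reflexive `G`,
a vertex of `[a,b]_G` other than `a, b` would give the path `a, z, b`.
-/

/-- A finite digraph: a finite nonempty vertex set `V ⊆ ℕ` together with an
arc set `A ⊆ V × V`. -/
structure Dgraph where
  V : Finset ℕ
  nonempty : V.Nonempty
  A : Finset (ℕ × ℕ)
  A_sub : ∀ p ∈ A, p.1 ∈ V ∧ p.2 ∈ V

namespace Dgraph

/-- The set of proper arcs of `G`, i.e. the arc set of `G*`. -/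
def Astar (G : Dgraph) : Finset (ℕ × ℕ) := G.A.filter (fun p => p.1 ≠ p.2)

/-- `G` is reflexive. -/
def IsRefl (G : Dgraph) : Prop := ∀ v ∈ G.V, (v, v) ∈ G.A

/-- `p` is a path in `G` (a nonempty list of pairwise distinct vertices,
consecutive ones joined by arcs).  Its length as a path is `p.length - 1`. -/
def IsPath (G : Dgraph) (p : List ℕ) : Prop :=
  p ≠ [] ∧ p.Nodup ∧ (∀ v ∈ p, v ∈ G.V) ∧ p.Chain' (fun v w => (v, w) ∈ G.A)

/-- `p` is a path in `G*`. -/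
def IsPathStar (G : Dgraph) (p : List ℕ) : Prop :=
  p ≠ [] ∧ p.Nodup ∧ (∀ v ∈ p, v ∈ G.V) ∧ p.Chain' (fun v w => (v, w) ∈ G.A ∧ v ≠ w)

/-- `G*` contains a closed walk. -/
def HasClosedWalkStar (G : Dgraph) : Prop :=
  ∃ p : List ℕ, (∀ v ∈ p, v ∈ G.V) ∧ p.Chain' (fun v w => (v, w) ∈ G.A ∧ v ≠ w) ∧
    2 ≤ p.length ∧ p.head? = p.getLast?

/-- membership in the class `𝔗ₐ`: `G*` is acyclic. -/
def MemTa (G : Dgraph) : Prop := ¬ G.HasClosedWalkStar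

/-- The height of `G`: the maximal length of a path in `G`. -/
noncomputable def height (G : Dgraph) : ℕ :=
  sSup {n | ∃ p, G.IsPath p ∧ p.length = n + 1}

/-- The interval `[v,w]_G`. -/
def interval (G : Dgraph) (v w : ℕ) : Finset ℕ :=
  G.V.filter (fun z => (v, z) ∈ G.A ∧ (z, w) ∈ G.A)

/-- `ι(v,w)_G`, the cardinality of the interval `[v,w]_G`. -/
def iota (G : Dgraph) (v w : ℕ) : ℕ := (G.interval v w).card

/-- The set `𝓗(G,H)` of homomorphisms from `G` to `H` (represented as total
maps `ℕ → ℕ`, normalized to `0` outside of `V(G)`). -/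
def Hom (G H : Dgraph) : Set (ℕ → ℕ) :=
  {f | (∀ v ∈ G.V, f v ∈ H.V) ∧ (∀ p ∈ G.A, (f p.1, f p.2) ∈ H.A) ∧
    ∀ v, v ∉ G.V → f v = 0}

/-- The set `𝓢(G,H)` of strict homomorphisms from `G` to `H`. -/
def SHom (G H : Dgraph) : Set (ℕ → ℕ) :=
  {f ∈ Hom G H | ∀ p ∈ G.Astar, f p.1 ≠ f p.2}

/-- `μ_ξ(G)`, for a homomorphism `ξ` from `G` into `H`. -/
def mu (G H : Dgraph) (f : ℕ → ℕ) : ℕ :=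
  ∑ p ∈ G.Astar, H.iota (f p.1) (f p.2)

/-- `L` is a subgraph of `G`. -/
def Subgraph (L G : Dgraph) : Prop := L.V ⊆ G.V ∧ L.A ⊆ G.A

/-- Restriction of a map to a vertex set (normalized to `0` outside). -/
def restrict (X : Finset ℕ) (f : ℕ → ℕ) : ℕ → ℕ := fun x => if x ∈ X then f x else 0

/-- `𝓜(L,H)`: homomorphisms from `L` to `H` with maximal `μ`. -/
def MSet (L H : Dgraph) : Set (ℕ → ℕ) :=
  {f ∈ Hom L H | ∀ g ∈ Hom L H, mu L H g ≤ mu L H f}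

/-- `𝓜^𝓛(G,H)`. -/
def MLSet (G H : Dgraph) (𝓛 : Set Dgraph) : Set (ℕ → ℕ) :=
  {f ∈ Hom G H | ∀ L ∈ 𝓛, restrict L.V f ∈ MSet L H}

/-- `𝓙^𝓛_{G,H'}(ξ)` for `ξ ∈ 𝓗(G,H)`. -/
def JSet (G H H' : Dgraph) (𝓛 : Set Dgraph) (ξ : ℕ → ℕ) : Set (ℕ → ℕ) :=
  {ζ ∈ Hom G H' | ∀ L ∈ 𝓛, ∀ p ∈ L.Astar,
    H'.iota (ζ p.1) (ζ p.2) = H.iota (ξ p.1) (ξ p.2)}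

/-- The digraph `P_×` of a path `P = P_0, …, P_ℓ`: vertex set `{P_0,…,P_ℓ}`
and arcs `P_{i-1}P_i`. -/
def pathGraph (P : List ℕ) (h : P ≠ []) : Dgraph where
  V := P.toFinset
  nonempty := by
    obtain ⟨a, t, rfl⟩ := List.exists_cons_of_ne_nil h
    exact ⟨a, by simp⟩
  A := (P.zip P.tail).toFinset
  A_sub := by
    intro p hp
    rw [List.mem_toFinset] at hp
    have h1 := List.of_mem_zip hp
    exact ⟨List.mem_toFinset.mpr h1.1, List.mem_toFinset.mpr (List.mem_of_mem_tail h1.2)⟩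

/-- `𝓛(G)`: the set of the digraphs `P_×` for the paths `P` of length `h_G` in `G`. -/
def LSet (G : Dgraph) : Set Dgraph :=
  {D | ∃ (P : List ℕ) (h : P ≠ []), G.IsPath P ∧ P.length = G.height + 1 ∧
    D = pathGraph P h}

/-- The class `𝕽`: reflexive digraphs `R ∈ 𝔗ₐ` with
`𝓜^{𝓛(R)}(R,R) ∩ 𝓢(R,R) ≠ ∅`. -/
def MemR (R : Dgraph) : Prop :=
  R.MemTa ∧ R.IsRefl ∧ (MLSet R R (LSet R) ∩ SHom R R).Nonempty

/-- `G` is a poset: reflexive, antisymmetric and transitive. -/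
def IsPoset (G : Dgraph) : Prop :=
  G.IsRefl ∧ (∀ v w, (v, w) ∈ G.A → (w, v) ∈ G.A → v = w) ∧
    (∀ u v w, (u, v) ∈ G.A → (v, w) ∈ G.A → (u, w) ∈ G.A)

/-- The class `𝔗ₐ^{=n}`: digraphs in `𝔗ₐ` of height `n` in which every vertex
lies on a path of length `n`. -/
def MemTaEq (n : ℕ) (G : Dgraph) : Prop :=
  G.MemTa ∧ G.height = n ∧ ∀ v ∈ G.V, ∃ p, G.IsPath p ∧ p.length = n + 1 ∧ v ∈ p

/-- A maximal path in `G`: no path in `G` properly contains its vertex set. -/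
def MaximalPath (G : Dgraph) (P : List ℕ) : Prop :=
  G.IsPath P ∧ ∀ Q, G.IsPath Q → (∀ v ∈ P, v ∈ Q) → ∀ v ∈ Q, v ∈ P

end Dgraph

open Dgraph

theorem List.IsChain.and {α : Type*} {R S : α → α → Prop} :
    ∀ {l : List α}, l.IsChain R → l.IsChain S → l.IsChain (fun a b => R a b ∧ S a b)
  | _, .nil, _ => .nil
  | _, .singleton _, _ => .singleton _
  | _, .cons_cons hr h, .cons_cons hs h' => .cons_cons ⟨hr, hs⟩ (h.and h')

theorem List.getD_pair_infix {α : Type*} (l : List α) (d : α) {i : ℕ}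
    (hi : 1 ≤ i) (hil : i < l.length) : [l.getD (i - 1) d, l.getD i d] <:+: l := by
  have hi1 : i - 1 < l.length := by omega
  refine ⟨l.take (i - 1), l.drop (i + 1), ?_⟩
  rw [List.getD_eq_getElem _ _ hi1, List.getD_eq_getElem _ _ hil]
  conv_rhs => rw [← List.take_append_drop (i - 1) l]
  rw [List.drop_eq_getElem_cons hi1, Nat.sub_add_cancel hi, List.drop_eq_getElem_cons hil]
  simp

theorem List.exists_eq_cons_append_singleton {α : Type*} {l : List α} {a b : α} (hab : a ≠ b)
    (hhead : l.head? = some a) (hlast : l.getLast? = some b) : ∃ m, l = a :: (m ++ [b]) := by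
  obtain ⟨t, rfl⟩ := List.getLast?_eq_some_iff.mp hlast
  cases t with
  | nil => exact absurd (by simpa using hhead) hab.symm
  | cons x m => exact ⟨m, by simp_all⟩

namespace Dgraph

def StarAdj (G : Dgraph) (v w : ℕ) : Prop := (v, w) ∈ G.A ∧ v ≠ w

variable {G : Dgraph}

theorem StarAdj.mem_V_left {v w : ℕ} (h : G.StarAdj v w) : v ∈ G.V := (G.A_sub _ h.1).1

theorem exists_walk_of_transGen {u v : ℕ} (h : Relation.TransGen G.StarAdj u v) :
    ∃ p : List ℕ, (∀ x ∈ p, x ∈ G.V) ∧ p.IsChain G.StarAdj ∧ 2 ≤ p.length ∧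
      p.head? = some u ∧ p.getLast? = some v := by
  induction h using Relation.TransGen.head_induction_on with
  | single huv =>
    refine ⟨[_, v], ?_, List.isChain_pair.mpr huv, le_rfl, rfl, rfl⟩
    simpa [huv.mem_V_left] using (G.A_sub _ huv.1).2
  | head hac _ ih =>
    obtain ⟨p, hpV, hpch, hlen, hhead, hlast⟩ := ih
    obtain ⟨q, rfl⟩ := List.head?_eq_some_iff.mp hhead
    refine ⟨_ :: _ :: q, ?_, ?_, by simp, rfl, by rwa [List.getLast?_cons_cons]⟩
    · simpa [hac.mem_V_left] using hpV
    · exact List.isChain_cons.mpr ⟨by simpa using hac, hpch⟩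

theorem MemTa.not_transGen_self (hG : G.MemTa) (u : ℕ) :
    ¬ Relation.TransGen G.StarAdj u u := fun h => hG (exists_walk_of_transGen h |>.imp
  fun _ ⟨hV, hch, hlen, hhead, hlast⟩ => ⟨hV, hch, hlen, hhead.trans hlast.symm⟩)

theorem IsPath.pairwise_transGen {p : List ℕ} (hp : G.IsPath p) :
    p.Pairwise (Relation.TransGen G.StarAdj) :=
  ((hp.2.2.2.and hp.2.1.isChain).imp fun _ _ h => .single h).pairwise

/-- Otherwise `z` would close a cycle of `G*` with the part of the path before `a` or after `b`. -/
theorem MemTa.not_mem_of_transGen_of_transGen (hG : G.MemTa) {S T : List ℕ} {a b z : ℕ}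
    (hP : G.IsPath (S ++ a :: b :: T)) (haz : Relation.TransGen G.StarAdj a z)
    (hzb : Relation.TransGen G.StarAdj z b) : z ∉ S ++ a :: b :: T := by
  have hlt := hP.pairwise_transGen
  simp only [List.pairwise_append, List.pairwise_cons, List.mem_cons] at hlt
  intro hz
  simp only [List.mem_append, List.mem_cons] at hz
  rcases hz with hzS | rfl | rfl | hzT
  · exact hG.not_transGen_self a (haz.trans (hlt.2.2 z hzS a (.inl rfl)))
  · exact hG.not_transGen_self _ haz
  · exact hG.not_transGen_self _ hzb
  · exact hG.not_transGen_self b (hlt.2.1.2.1 z hzT |>.trans hzb)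

theorem IsPath.splice {S M T : List ℕ} {a b : ℕ} (hP : G.IsPath (S ++ a :: b :: T))
    (hQ : G.IsPath (a :: (M ++ [b]))) (hM : ∀ z ∈ M, z ∉ S ++ a :: b :: T) :
    G.IsPath (S ++ a :: (M ++ b :: T)) := by
  obtain ⟨-, hPnd, hPV, hPch⟩ := hP
  obtain ⟨-, hQnd, hQV, hQch⟩ := hQ
  refine ⟨by simp, ?_, ?_, ?_⟩
  · have hperm : (S ++ a :: (M ++ b :: T)).Perm (M ++ (S ++ a :: b :: T)) := by
      simp only [List.perm_iff_count, List.count_append, List.count_cons]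
      intro x
      omega
    have hMnd : M.Nodup := hQnd.sublist ((List.sublist_append_left M [b]).cons a)
    exact hperm.nodup_iff.mpr
      (List.nodup_append.mpr ⟨hMnd, hPnd, fun x hx _ hy hxy => hM x hx (hxy ▸ hy)⟩)
  · intro v hv
    simp only [List.mem_append, List.mem_cons] at hv
    rcases hv with hv | rfl | hv | rfl | hv
    · exact hPV v (by simp [hv])
    · exact hPV _ (by simp)
    · exact hQV v (by simp [hv])
    · exact hPV _ (by simp)
    · exact hPV v (by simp [hv])
  · have hSa : (S ++ [a]).IsChain _ := hPch.infix ⟨[], b :: T, by simp⟩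
    have hbT : ([b] ++ T).IsChain _ := hPch.infix ⟨S ++ [a], [], by simp⟩
    have haMb : ((a :: M) ++ [b]).IsChain _ := hQch
    have haMbT : ([a] ++ (M ++ [b] ++ T)).IsChain fun v w => (v, w) ∈ G.A := by
      simpa using haMb.append_overlap hbT (by simp)
    have hchain := hSa.append_overlap haMbT (by simp)
    simp only [List.append_assoc, List.cons_append] at hchain
    exact hchain

theorem MaximalPath.eq_pair_of_isPath (hG : G.MemTa) {P Q : List ℕ} {a b : ℕ}
    (hP : G.MaximalPath P) (hab : [a, b] <:+: P) (hQ : G.IsPath Q)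
    (hhead : Q.head? = some a) (hlast : Q.getLast? = some b) : Q = [a, b] := by
  have hne : a ≠ b := by
    rintro rfl
    exact hG.not_transGen_self a
      (List.pairwise_pair.mp (hP.1.pairwise_transGen.sublist hab.sublist))
  obtain ⟨M, rfl⟩ := List.exists_eq_cons_append_singleton hne hhead hlast
  obtain ⟨S, T, rfl⟩ := hab
  have hP' : G.IsPath (S ++ a :: b :: T) := by simpa using hP.1
  have hbetween : ∀ z ∈ M, z ∉ S ++ a :: b :: T := by
    have hQlt := hQ.pairwise_transGen
    simp only [List.pairwise_cons, List.pairwise_append, List.mem_append,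
      List.mem_singleton] at hQlt
    exact fun z hz => hG.not_mem_of_transGen_of_transGen hP' (hQlt.1 z (.inl hz))
      (hQlt.2.2.2 z hz b rfl)
  suffices hM : M = [] by simp [hM]
  by_contra hM
  obtain ⟨z, hz⟩ := List.exists_mem_of_ne_nil M hM
  have hsub : ∀ v ∈ S ++ [a, b] ++ T, v ∈ S ++ a :: (M ++ b :: T) := by
    intro v hv
    simp only [List.mem_append, List.mem_cons] at hv ⊢
    tauto
  have hzP := hP.2 _ (hP'.splice hQ hbetween) hsub z (by simp [hz])
  exact hbetween z hz (by simpa using hzP)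

theorem iota_eq_two_of_forall_isPath (hR : G.IsRefl) {a b : ℕ} (hab : (a, b) ∈ G.A)
    (huniq : ∀ Q, G.IsPath Q → Q.head? = some a → Q.getLast? = some b → Q = [a, b]) :
    G.iota a b = 2 := by
  obtain ⟨haV, hbV⟩ := G.A_sub _ hab
  have hne : a ≠ b := by
    rintro rfl
    simpa using huniq [a] ⟨by simp, by simp, by simpa using haV, .singleton a⟩ rfl rfl
  suffices G.interval a b = {a, b} by rw [iota, this, Finset.card_pair hne]
  ext z
  simp only [interval, Finset.mem_filter, Finset.mem_insert, Finset.mem_singleton]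
  constructor
  · rintro ⟨hzV, haz, hzb⟩
    by_contra! hz
    have hpath : G.IsPath [a, z, b] :=
      ⟨by simp, by simp [hne, hz.1.symm, hz.2], by simp [haV, hzV, hbV],
        List.isChain_cons_cons.mpr ⟨haz, List.isChain_pair.mpr hzb⟩⟩
    simpa using huniq _ hpath rfl rfl
  · rintro (rfl | rfl)
    · exact ⟨haV, hR _ haV, hab⟩
    · exact ⟨hbV, hab, hR _ hbV⟩

end Dgraph

theorem stmt_15 (G : Dgraph) (hG : G.MemTa) (P : List ℕ) (hP : MaximalPath G P) :
    (∀ i, 1 ≤ i → i < P.length →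
      ∀ Q : List ℕ, G.IsPath Q → Q.head? = some (P.getD (i - 1) 0) →
        Q.getLast? = some (P.getD i 0) → Q = [P.getD (i - 1) 0, P.getD i 0]) ∧
    (G.IsRefl → ∀ i, 1 ≤ i → i < P.length →
      G.iota (P.getD (i - 1) 0) (P.getD i 0) = 2) := by
  have hunique : ∀ i, 1 ≤ i → i < P.length →
      ∀ Q : List ℕ, G.IsPath Q → Q.head? = some (P.getD (i - 1) 0) →
        Q.getLast? = some (P.getD i 0) → Q = [P.getD (i - 1) 0, P.getD i 0] :=
    fun i hi hil _ => hP.eq_pair_of_isPath hG (P.getD_pair_infix 0 hi hil)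
  refine ⟨hunique, fun hR i hi hil => iota_eq_two_of_forall_isPath hR ?_ (hunique i hi hil)⟩
  exact List.isChain_pair.mp (hP.1.2.2.2.infix (P.getD_pair_infix 0 hi hil))
end

section
/- Let G ∈ 𝔗_a. If P = P_0,…,P_{h_G} and P' = P'_0,…,P'_{h_G} are paths of length h_G in G and P_i = P'_j for some indices i and j, then i = j. Equivalently, there is a map g from the set of vertices lying on paths of length h_G to {0,…,h_G} such that v = P_{g(v)} for every path P of length h_G in G and every vertex v of P. -/
open Dgraph

/-
If `P_i = P'_j` with `i < j`, then `P'_0, …, P'_j, P_{i+1}, …, P_{h_G}` is a walk of length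
`h_G + (j - i)` in `G*` (the arcs of a path are proper because its vertices are distinct).
As `G*` is acyclic, this walk is a path, contradicting the maximality of `h_G`.
-/

namespace List

variable {α : Type*}

theorem IsChain.and_ne_of_nodup {R : α → α → Prop} {l : List α} (hc : l.IsChain R)
    (hl : l.Nodup) : l.IsChain (fun a b => R a b ∧ a ≠ b) := by
  induction hc with
  | nil => exact .nil
  | singleton a => exact .singleton a
  | cons_cons hab _ ih =>
    rw [nodup_cons] at hl
    exact .cons_cons ⟨hab, fun h => hl.1 (h ▸ mem_cons_self)⟩ (ih hl.2)

theorem Duplicate.exists_infix_head?_eq_getLast? {x : α} {l : List α} (h : Duplicate x l) :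
    ∃ c, c <:+: l ∧ 2 ≤ c.length ∧ c.head? = c.getLast? := by
  induction h with
  | @cons_mem l hx =>
    obtain ⟨s, t, rfl⟩ := append_of_mem hx
    exact ⟨x :: s ++ [x], ⟨[], t, by simp⟩, by simp, by simp [getLast?_cons]⟩
  | cons_duplicate _ ih =>
    obtain ⟨c, hc, hlen, hcycle⟩ := ih
    exact ⟨c, hc.trans (suffix_cons _ _).isInfix, hlen, hcycle⟩

theorem IsChain.take_append_drop_of_getElem_eq {R : α → α → Prop} {l l' : List α}
    (hc : l.IsChain R) (hc' : l'.IsChain R) {i j : ℕ} (hi : i < l.length)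
    (hj : j < l'.length) (heq : l[i] = l'[j]) :
    (l'.take (j + 1) ++ l.drop (i + 1)).IsChain R := by
  refine (hc'.take _).append (hc.drop _) fun x hx y hy => ?_
  rw [getLast?_take, if_neg (by omega), Nat.add_sub_cancel, getElem?_eq_getElem hj,
    Option.some_or, Option.mem_some_iff] at hx
  rw [head?_drop, Option.mem_def, getElem?_eq_some_iff] at hy
  obtain ⟨hi', rfl⟩ := hy
  subst hx
  exact heq ▸ isChain_iff_getElem.1 hc i hi'

end List

namespace Dgraph

variable {G : Dgraph} {p : List ℕ}

theorem IsPath.length_le_card (hp : G.IsPath p) : p.length ≤ G.V.card := by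
  rw [← List.toFinset_card_of_nodup hp.2.1]
  exact Finset.card_le_card fun v hv => hp.2.2.1 v (List.mem_toFinset.1 hv)

theorem IsPath.length_le_height_succ (hp : G.IsPath p) : p.length ≤ G.height + 1 := by
  have hbdd : BddAbove {n | ∃ p, G.IsPath p ∧ p.length = n + 1} :=
    ⟨G.V.card, fun n ⟨q, hq, hqn⟩ => by have := hq.length_le_card; omega⟩
  have hpos : 0 < p.length := List.length_pos_iff.2 hp.1
  have := le_csSup hbdd ⟨p, hp, (Nat.sub_add_cancel hpos).symm⟩
  rw [height]
  omega

theorem MemTa.nodup_of_isChain (hG : G.MemTa) (hV : ∀ v ∈ p, v ∈ G.V)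
    (hc : p.IsChain fun v w => (v, w) ∈ G.A ∧ v ≠ w) : p.Nodup := by
  by_contra hp
  obtain ⟨x, hx⟩ := List.exists_duplicate_iff_not_nodup.2 hp
  obtain ⟨c, hcp, hlen, hcycle⟩ := hx.exists_infix_head?_eq_getLast?
  exact hG ⟨c, fun v hv => hV v (hcp.subset hv), hc.infix hcp, hlen, hcycle⟩

theorem MemTa.index_le_of_getElem_eq (hG : G.MemTa) {P P' : List ℕ} (hP : G.IsPath P)
    (hP' : G.IsPath P') (hl : P.length = G.height + 1) {i j : ℕ} (hi : i < P.length)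
    (hj : j < P'.length) (heq : P[i] = P'[j]) : j ≤ i := by
  by_contra! hij
  set q := P'.take (j + 1) ++ P.drop (i + 1)
  have hqlen : q.length = j + 1 + (P.length - (i + 1)) := by
    simp only [q, List.length_append, List.length_take, List.length_drop]
    omega
  have hqV : ∀ v ∈ q, v ∈ G.V := by
    simp only [q, List.mem_append]
    rintro v (hv | hv)
    exacts [hP'.2.2.1 v (List.mem_of_mem_take hv), hP.2.2.1 v (List.mem_of_mem_drop hv)]
  have hqc : q.IsChain fun v w => (v, w) ∈ G.A ∧ v ≠ w :=
    (hP.2.2.2.and_ne_of_nodup hP.2.1).take_append_drop_of_getElem_eq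
      (hP'.2.2.2.and_ne_of_nodup hP'.2.1) hi hj heq
  have hq : G.IsPath q :=
    ⟨List.ne_nil_of_length_pos (by omega), hG.nodup_of_isChain hqV hqc, hqV,
      hqc.imp fun _ _ h => h.1⟩
  have := hq.length_le_height_succ
  omega

end Dgraph

theorem stmt_16 (G : Dgraph) (hG : G.MemTa)
    (P P' : List ℕ) (hP : G.IsPath P) (hP' : G.IsPath P')
    (hl : P.length = G.height + 1) (hl' : P'.length = G.height + 1)
    (i j : ℕ) (hi : i < P.length) (hj : j < P'.length)
    (heq : P.getD i 0 = P'.getD j 0) : i = j := by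
  rw [List.getD_eq_getElem _ _ hi, List.getD_eq_getElem _ _ hj] at heq
  exact le_antisymm (hG.index_le_of_getElem_eq hP' hP hl' hj hi heq.symm)
    (hG.index_le_of_getElem_eq hP hP' hl hi hj heq)
end

section
/- Let G ∈ 𝔗_a and let H ∈ 𝔗_a be reflexive with h_G = h_H, and let σ ∈ 𝓢(G,H). Then ι_σ(P_{i-1},P_i) = 2 for every path P = P_0,…,P_{h_G} of length h_G in G and every 1 ≤ i ≤ h_G; in particular, Σ_{i=1}^{h_G} ι_σ(P_{i-1},P_i) = 2·h_H, and 𝓢(G,H) ⊆ 𝓙^{𝓛(G)}_{G,H}(σ). -/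
namespace List

theorem eq_take_append_getElem_cons_getElem_cons_drop {α : Type*} (l : List α) {i : ℕ}
    (hi : i + 1 < l.length) : l = l.take i ++ l[i] :: l[i + 1] :: l.drop (i + 2) := by
  rw [← drop_eq_getElem_cons, ← drop_eq_getElem_cons, take_append_drop]

theorem exists_eq_append_cons_cons_of_mem_zip_tail {α : Type*} {l : List α} {a b : α}
    (h : (a, b) ∈ l.zip l.tail) : ∃ l₁ l₂, l = l₁ ++ a :: b :: l₂ := by
  induction l with
  | nil => simp at h
  | cons x t ih =>
    cases t with
    | nil => simp at h
    | cons y t =>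
      rcases mem_cons.mp h with h | h
      · obtain ⟨rfl, rfl⟩ := Prod.mk.inj h
        exact ⟨[], t, rfl⟩
      · obtain ⟨l₁, l₂, hl⟩ := ih h
        exact ⟨x :: l₁, l₂, by rw [hl, cons_append]⟩

theorem IsChain.and_s17 {α : Type*} {R S : α → α → Prop} {l : List α} (hR : l.IsChain R)
    (hS : l.IsChain S) : l.IsChain fun a b => R a b ∧ S a b :=
  isChain_iff_forall_rel_of_append_cons_cons.mpr fun _ _ _ _ h =>
    ⟨isChain_iff_forall_rel_of_append_cons_cons.mp hR h,
      isChain_iff_forall_rel_of_append_cons_cons.mp hS h⟩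

end List

namespace Dgraph

open List

theorem length_le_height_add_one {G : Dgraph} {p : List ℕ} (hp : G.IsPath p) :
    p.length ≤ G.height + 1 := by
  have hbdd : BddAbove {n | ∃ p, G.IsPath p ∧ p.length = n + 1} := by
    refine ⟨G.V.card, ?_⟩
    rintro n ⟨q, hq, hqn⟩
    have := Finset.card_le_card fun v hv => hq.2.2.1 v (mem_toFinset.mp hv)
    rw [toFinset_card_of_nodup hq.2.1] at this
    omega
  have hpos : p.length ≠ 0 := by simpa using hp.1
  have := le_csSup hbdd ⟨p, hp, (Nat.sub_add_cancel (Nat.pos_of_ne_zero hpos)).symm⟩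
  exact Nat.le_add_of_sub_le this

theorem nodup_of_isChain_proper {H : Dgraph} (hH : H.MemTa) {Q : List ℕ}
    (hV : ∀ v ∈ Q, v ∈ H.V) (hc : Q.IsChain fun v w => (v, w) ∈ H.A ∧ v ≠ w) : Q.Nodup := by
  induction Q with
  | nil => exact nodup_nil
  | cons a t ih =>
    refine nodup_cons.mpr ⟨fun ha => hH ?_, ih (fun v hv => hV v (mem_cons_of_mem _ hv)) hc.tail⟩
    obtain ⟨s, u, rfl⟩ := append_of_mem ha
    refine ⟨a :: s ++ [a], fun v hv => hV v ?_, ?_, by simp, by rw [getLast?_concat]; rfl⟩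
    · simp only [cons_append, mem_cons, mem_append] at hv ⊢
      tauto
    · exact IsChain.left_of_append (l₂ := u) (by simpa using hc)

theorem isChain_proper_map_of_isPath {G H : Dgraph} {σ : ℕ → ℕ} (hσ : σ ∈ SHom G H)
    {P : List ℕ} (hP : G.IsPath P) :
    (∀ v ∈ P.map σ, v ∈ H.V) ∧ (P.map σ).IsChain fun v w => (v, w) ∈ H.A ∧ v ≠ w := by
  obtain ⟨⟨hσV, hσA, -⟩, hσs⟩ := hσ
  obtain ⟨-, hnd, hPV, hPc⟩ := hP
  refine ⟨forall_mem_map.mpr fun v hv => hσV v (hPV v hv), ?_⟩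
  refine isChain_map_of_isChain σ ?_ (hPc.and_s17 hnd.isChain)
  rintro v w ⟨hvw, hne⟩
  exact ⟨hσA _ hvw, hσs _ (Finset.mem_filter.mpr ⟨hvw, hne⟩)⟩

theorem iota_eq_two_of_isChain_proper {H : Dgraph} (hH : H.MemTa) (hHr : H.IsRefl)
    {l₁ l₂ : List ℕ} {a b : ℕ} (hV : ∀ v ∈ l₁ ++ a :: b :: l₂, v ∈ H.V)
    (hc : (l₁ ++ a :: b :: l₂).IsChain fun v w => (v, w) ∈ H.A ∧ v ≠ w)
    (hlen : (l₁ ++ a :: b :: l₂).length = H.height + 1) : H.iota a b = 2 := by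
  obtain ⟨-, ⟨hab, hne⟩, -⟩ := isChain_append_cons_cons.mp hc
  have haV : a ∈ H.V := hV a (by simp)
  have hbV : b ∈ H.V := hV b (by simp)
  suffices H.interval a b = {a, b} by rw [iota, this, Finset.card_pair hne]
  ext z
  simp only [interval, Finset.mem_filter, Finset.mem_insert, Finset.mem_singleton]
  constructor
  · rintro ⟨hzV, hza, hzb⟩
    by_contra! hzab
    have hc' : (l₁ ++ a :: z :: b :: l₂).IsChain fun v w => (v, w) ∈ H.A ∧ v ≠ w := by
      rw [isChain_append_cons_cons] at hc ⊢
      exact ⟨hc.1, ⟨hza, Ne.symm hzab.1⟩, isChain_cons_cons.mpr ⟨⟨hzb, hzab.2⟩, hc.2.2⟩⟩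
    have hV' : ∀ v ∈ l₁ ++ a :: z :: b :: l₂, v ∈ H.V := by
      intro v hv
      rcases eq_or_ne v z with rfl | hvz
      · exact hzV
      · exact hV v (by simp_all)
    have := length_le_height_add_one
      ⟨by simp, nodup_of_isChain_proper hH hV' hc', hV', hc'.imp fun _ _ h => h.1⟩
    simp only [length_append, length_cons] at this hlen
    omega
  · rintro (rfl | rfl)
    exacts [⟨haV, hHr _ haV, hab⟩, ⟨hbV, hab, hHr _ hbV⟩]

theorem iota_map_eq_two {G H : Dgraph} (hH : H.MemTa) (hHr : H.IsRefl)
    (hh : G.height = H.height) {σ : ℕ → ℕ} (hσ : σ ∈ SHom G H) {P : List ℕ} (hP : G.IsPath P)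
    (hlen : P.length = G.height + 1) {l₁ l₂ : List ℕ} {a b : ℕ}
    (hsplit : P = l₁ ++ a :: b :: l₂) : H.iota (σ a) (σ b) = 2 := by
  obtain ⟨hV, hc⟩ := isChain_proper_map_of_isPath hσ hP
  subst hsplit
  simp only [map_append, map_cons] at hV hc
  exact iota_eq_two_of_isChain_proper hH hHr hV hc (by simpa [hh] using hlen)

end Dgraph

open Dgraph

theorem stmt_17_general (G H : Dgraph) (hH : H.MemTa) (hHr : H.IsRefl)
    (hh : G.height = H.height) (σ : ℕ → ℕ) (hσ : σ ∈ SHom G H) :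
    (∀ P : List ℕ, G.IsPath P → P.length = G.height + 1 →
      ∀ i, i + 1 < P.length →
        H.iota (σ (P.getD i 0)) (σ (P.getD (i + 1) 0)) = 2) ∧
    (∀ P : List ℕ, G.IsPath P → P.length = G.height + 1 →
      ∑ i ∈ Finset.range G.height,
        H.iota (σ (P.getD i 0)) (σ (P.getD (i + 1) 0)) = 2 * H.height) ∧
    SHom G H ⊆ JSet G H H (LSet G) σ := by
  have consecutive : ∀ P : List ℕ, G.IsPath P → P.length = G.height + 1 →
      ∀ i, i + 1 < P.length → H.iota (σ (P.getD i 0)) (σ (P.getD (i + 1) 0)) = 2 := by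
    intro P hP hlen i hi
    rw [List.getD_eq_getElem _ _ (by omega), List.getD_eq_getElem _ _ hi]
    exact iota_map_eq_two hH hHr hh hσ hP hlen (P.eq_take_append_getElem_cons_getElem_cons_drop hi)
  refine ⟨consecutive, fun P hP hlen => ?_, fun ζ hζ => ⟨hζ.1, ?_⟩⟩
  · rw [Finset.sum_congr rfl fun i hi => consecutive P hP hlen i (by simp at hi; omega),
      Finset.sum_const, Finset.card_range, smul_eq_mul, hh, mul_comm]
  · rintro L ⟨P, hne, hP, hlen, rfl⟩ ⟨a, b⟩ hab
    obtain ⟨l₁, l₂, hsplit⟩ := List.exists_eq_append_cons_cons_of_mem_zip_tail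
      (List.mem_toFinset.mp (Finset.mem_filter.mp hab).1)
    rw [iota_map_eq_two hH hHr hh hζ hP hlen hsplit, iota_map_eq_two hH hHr hh hσ hP hlen hsplit]

theorem stmt_17 (G H : Dgraph) (hG : G.MemTa) (hH : H.MemTa) (hHr : H.IsRefl)
    (hh : G.height = H.height) (σ : ℕ → ℕ) (hσ : σ ∈ SHom G H) :
    (∀ P : List ℕ, G.IsPath P → P.length = G.height + 1 →
      ∀ i, i + 1 < P.length →
        H.iota (σ (P.getD i 0)) (σ (P.getD (i + 1) 0)) = 2) ∧
    (∀ P : List ℕ, G.IsPath P → P.length = G.height + 1 →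
      ∑ i ∈ Finset.range G.height,
        H.iota (σ (P.getD i 0)) (σ (P.getD (i + 1) 0)) = 2 * H.height) ∧
    SHom G H ⊆ JSet G H H (LSet G) σ :=
  stmt_17_general G H hH hHr hh σ hσ
end
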